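/- For the natural action of the monoid algebra ℂ[T_n] on ℂ^n (given by f · v_i = v_{f(i)}), the induced action on the r-th exterior power Λ^r(ℂ^n) makes Λ^r(ℂ^n) a ℂ[T_n]-module, and the element η = (1/r!) Σ_{g ∈ G} sgn(g|_{[r]}) g, where G is the group of units of e_r T_n e_r, is an idempotent of ℂ[T_n] with ℂ[T_n]·η ≅ Λ^r(ℂ^n) as left ℂ[T_n]-modules; in particular Λ^r(ℂ^n) is a projective ℂ[T_n]-module. -/

import Mathlib

open Finset in
/-- The natural representation of the full transformation monoid `Function.End (Fin n)`
on `ℂ^n`, determined by `f · v_i = v_{f i}` on the standard basis. -/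
noncomputable def natRep (n : ℕ) :
    Representation ℂ (Function.End (Fin n)) (Fin n → ℂ) where
  toFun f :=
    { toFun := fun x j => ∑ i, if f i = j then x i else 0
      map_add' := by
        intro x y
        funext j
        simp only [Pi.add_apply]
        rw [← Finset.sum_add_distrib]
        congr 1; funext i; split <;> simp
      map_smul' := by
        intro c x
        funext j
        simp [Finset.mul_sum, apply_ite (fun t => c * t)] }
  map_one' := by
    refine LinearMap.ext fun x => funext fun j => ?_
    show (∑ i, if (1 : Function.End (Fin n)) i = j then x i else 0) = x j
    have h : ∀ i : Fin n, (1 : Function.End (Fin n)) i = i := fun _ => rfl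
    simp only [h]
    rw [Finset.sum_ite_eq' Finset.univ j x]
    simp
  map_mul' := by
    intro f g
    refine LinearMap.ext fun x => funext fun j => ?_
    show (∑ i, if f (g i) = j then x i else 0)
        = ∑ k, if f k = j then ∑ i, if g i = k then x i else 0 else 0
    have key : ∀ k, (if f k = j then ∑ i, if g i = k then x i else 0 else 0)
        = ∑ i, if g i = k then (if f k = j then x i else 0) else 0 := by
      intro k; split
      · rfl
      · simp
    rw [Finset.sum_congr rfl (fun k _ => key k), Finset.sum_comm]
    refine Finset.sum_congr rfl fun i _ => ?_
    rw [Finset.sum_ite_eq Finset.univ (g i) (fun k => if f k = j then x i else 0)]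
    simp

lemma sum_natRep (n : ℕ) (f : Function.End (Fin n)) (x : Fin n → ℂ) :
    ∑ j, natRep n f x j = ∑ i, x i := by
  show ∑ j, ∑ i, (if f i = j then x i else 0) = _
  rw [Finset.sum_comm]
  simp [Finset.sum_ite_eq' Finset.univ]

/-- The augmentation submodule `Aug(ℂ^n)` of the natural module: vectors whose
coordinates sum to zero. -/
noncomputable def Aug (n : ℕ) : Submodule ℂ (Fin n → ℂ) where
  carrier := {x | ∑ i, x i = 0}
  add_mem' := by intro a b ha hb; simp_all [Finset.sum_add_distrib]
  zero_mem' := by simp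
  smul_mem' := by intro c a ha; simp_all [← Finset.mul_sum]

lemma natRep_mem_aug (n : ℕ) (f : Function.End (Fin n)) {x : Fin n → ℂ}
    (hx : x ∈ Aug n) : natRep n f x ∈ Aug n := by
  have : ∑ j, natRep n f x j = 0 := by rw [sum_natRep]; exact hx
  exact this

/-- The representation of the full transformation monoid on the augmentation submodule. -/
noncomputable def augRep (n : ℕ) : Representation ℂ (Function.End (Fin n)) (Aug n) where
  toFun f := (natRep n f).restrict (p := Aug n) (q := Aug n) (fun _ hx => natRep_mem_aug n f hx)
  map_one' := by
    refine LinearMap.ext fun x => Subtype.ext ?_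
    simp [LinearMap.restrict_apply]
  map_mul' := by
    intro f g
    refine LinearMap.ext fun x => Subtype.ext ?_
    simp [LinearMap.restrict_apply]

lemma extAlg_map_mem {R M N : Type} [CommRing R] [AddCommGroup M] [Module R M]
    [AddCommGroup N] [Module R N] (r : ℕ) (f : M →ₗ[R] N) {x : ExteriorAlgebra R M}
    (hx : x ∈ ⋀[R]^r M) : ExteriorAlgebra.map f x ∈ ⋀[R]^r N := by
  rw [← ExteriorAlgebra.ιMulti_span_fixedDegree] at hx ⊢
  induction hx using Submodule.span_induction with
  | mem y hy =>
      obtain ⟨v, rfl⟩ := hy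
      rw [ExteriorAlgebra.map_apply_ιMulti]
      exact Submodule.subset_span ⟨f ∘ v, rfl⟩
  | zero => simp
  | add y z _ _ hy hz => rw [map_add]; exact Submodule.add_mem _ hy hz
  | smul c y _ hy => rw [map_smul]; exact Submodule.smul_mem _ c hy

/-- The linear map between `r`-th exterior powers induced by a linear map. -/
noncomputable def extMap {R M N : Type} [CommRing R] [AddCommGroup M] [Module R M]
    [AddCommGroup N] [Module R N] (r : ℕ) (f : M →ₗ[R] N) :
    ⋀[R]^r M →ₗ[R] ⋀[R]^r N :=
  (ExteriorAlgebra.map f).toLinearMap.restrict (p := ⋀[R]^r M) (q := ⋀[R]^r N)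
    (fun _ hx => extAlg_map_mem r f hx)

/-- The representation of the full transformation monoid on the `r`-th exterior power
of the natural module, by the diagonal action on wedge products. -/
noncomputable def extRep (n r : ℕ) :
    Representation ℂ (Function.End (Fin n)) (⋀[ℂ]^r (Fin n → ℂ)) where
  toFun f := extMap r (natRep n f)
  map_one' := by
    refine LinearMap.ext fun x => Subtype.ext ?_
    simp [extMap, LinearMap.restrict_apply, map_one, Module.End.one_eq_id,
      ExteriorAlgebra.map_id]
  map_mul' := by
    intro f g
    refine LinearMap.ext fun x => Subtype.ext ?_
    simp only [extMap, LinearMap.restrict_apply, map_mul, Module.End.mul_eq_comp,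
      ← ExteriorAlgebra.map_comp_map]
    rfl

set_option synthInstance.maxHeartbeats 1000000 in
/-- The representation of the full transformation monoid on the `r`-th exterior power
of the augmentation submodule. -/
noncomputable def extAugRep (n r : ℕ) :
    Representation ℂ (Function.End (Fin n)) (⋀[ℂ]^r ↥(Aug n)) where
  toFun f := extMap r (augRep n f)
  map_one' := by
    refine LinearMap.ext fun x => Subtype.ext ?_
    simp [extMap, LinearMap.restrict_apply, map_one, Module.End.one_eq_id,
      ExteriorAlgebra.map_id]
  map_mul' := by
    intro f g
    refine LinearMap.ext fun x => Subtype.ext ?_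
    simp only [extMap, LinearMap.restrict_apply, map_mul, Module.End.mul_eq_comp,
      ← ExteriorAlgebra.map_comp_map]
    rfl

/-- The idempotent `e_m ∈ T_n` fixing the first `m` points and sending all other
points to the first point. -/
def eIdem (n m : ℕ) : Function.End (Fin n) :=
  fun i => if h : (i : ℕ) < m then i else ⟨0, i.pos⟩

/-- The embedding of the symmetric group `S_r` into `T_n` as the maximal subgroup
at the idempotent `eIdem n r` (elements `g` with `e g e = g` invertible in `e T_n e`). -/
def permEmbed (n r : ℕ) (hr : 1 ≤ r) (hrn : r ≤ n) (σ : Equiv.Perm (Fin r)) :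
    Function.End (Fin n) :=
  fun i => Fin.castLE hrn (σ (if hi : (i : ℕ) < r then ⟨i, hi⟩ else ⟨0, hr⟩))

/-- The idempotent `η = (1/r!) ∑_{g ∈ G} sgn(g|_{[r]}) g` of the monoid algebra,
where `G ≅ S_r` is the maximal subgroup at `eIdem n r`. -/
noncomputable def eta (n r : ℕ) (hr : 1 ≤ r) (hrn : r ≤ n) :
    MonoidAlgebra ℂ (Function.End (Fin n)) :=
  (r.factorial : ℂ)⁻¹ • ∑ σ : Equiv.Perm (Fin r),
    MonoidAlgebra.single (permEmbed n r hr hrn σ) ((Equiv.Perm.sign σ : ℤ) : ℂ)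

/-- A permutation of `Fin m`, viewed as an element of the transformation monoid. -/
def permToEnd (m : ℕ) : Equiv.Perm (Fin m) →* Function.End (Fin m) where
  toFun σ := ⇑σ
  map_one' := rfl
  map_mul' := fun _ _ => rfl

/-- The wedge product of a family of `r` vectors, as an element of the `r`-th
exterior power. -/
noncomputable def wedge {M : Type} [AddCommGroup M] [Module ℂ M] (r : ℕ) (v : Fin r → M) :
    ⋀[ℂ]^r M :=
  ⟨ExteriorAlgebra.ιMulti ℂ r v, ExteriorAlgebra.ιMulti_range ℂ r ⟨v, rfl⟩⟩

/-- The basis `w_1, …, w_n` of `ℂ^n`: `w_i = v_i - v_n` for `i < n` and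
`w_n = v_1 + ⋯ + v_n`. -/
noncomputable def wBasis (n : ℕ) : Fin n → (Fin n → ℂ) :=
  fun i => if h : (i : ℕ) < n - 1
    then Pi.single i 1 - Pi.single (⟨n - 1, by omega⟩ : Fin n) 1
    else ∑ j, Pi.single j 1

lemma wBasis_mem_aug (n : ℕ) (i : Fin n) (h : (i : ℕ) < n - 1) : wBasis n i ∈ Aug n := by
  show ∑ j, wBasis n i j = 0
  simp [wBasis, h, Finset.sum_sub_distrib, Finset.sum_pi_single]

/-- The vectors `w_i = v_i - v_n` (for `i < n`) as elements of the augmentation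
submodule; junk value `0` otherwise. -/
noncomputable def wAug (n : ℕ) : Fin n → ↥(Aug n) :=
  fun i => if h : (i : ℕ) < n - 1 then ⟨wBasis n i, wBasis_mem_aug n i h⟩ else 0

/-- The trivial representation of the full transformation monoid on `ℂ`. -/
noncomputable def trivRep (n : ℕ) : Representation ℂ (Function.End (Fin n)) ℂ := 1

/-- `projDimLE R M k` : the `R`-module `M` admits a projective resolution of length
at most `k`, i.e. has projective dimension at most `k`. -/
def projDimLE (R : Type) [Ring R] (M : Type) [AddCommMonoid M] [Module R M] (k : ℕ) : Prop :=
  ∃ (P : ℕ → ModuleCat.{0} R) (d : (i : ℕ) → (P (i + 1) →ₗ[R] P i)) (π : P 0 →ₗ[R] M),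
    (∀ i, Module.Projective R (P i)) ∧
    Function.Surjective π ∧
    LinearMap.ker π = LinearMap.range (d 0) ∧
    (∀ i, LinearMap.ker (d i) = LinearMap.range (d (i + 1))) ∧
    (∀ i, k < i → Subsingleton (P i))

/-- The sign character of `S_n`, extended by zero to all of `T_n`. -/
noncomputable def sgnExt (n : ℕ) (f : Function.End (Fin n)) : ℂ :=
  @dite _ (Function.Bijective f) (Fintype.decidableBijectiveFintype f)
    (fun h => ((Equiv.Perm.sign (Equiv.ofBijective f h) : ℤ) : ℂ)) (fun _ => 0)

/-!
For `σ ∈ S_r` the transformation `g_σ = permEmbed σ` satisfies `g_σ η = sgn(σ) η`; summing over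
`σ` gives `η² = η`, and then right multiplication by `η` splits `ℂ[T_n] η` off `ℂ[T_n]`, so it
is projective.

Write `w = v_1 ∧ ⋯ ∧ v_r`. Every basis wedge `v_{u 1} ∧ ⋯ ∧ v_{u r}` is `f · w` for a
transformation `f` extending `u`, so `a ↦ a · w` maps `ℂ[T_n]` onto `Λ^r(ℂ^n)`, and `η · w = w`
since each `g_σ` permutes the factors of `w`. On `ℂ[T_n] η` this map is injective: antisymmetrizing
`v_{u 1} ⊗ ⋯ ⊗ v_{u r} ↦ g_u` (with `g_u` the transformation acting as `u` on `[r]` and constant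
beyond) gives a linear map `Λ^r(ℂ^n) → ℂ[T_n]` sending `a · w` back to `a η`, because
`f η = g_{f|[r]} η`.
-/

open MonoidAlgebra

namespace IsIdempotentElem

variable {A M : Type*} [Semiring A] [AddCommMonoid M] [Module A M] {e : A}

theorem mul_eq_self_of_mem_span_singleton (he : IsIdempotentElem e) {x : A}
    (hx : x ∈ Submodule.span A {e}) : x * e = x := by
  obtain ⟨a, rfl⟩ := Submodule.mem_span_singleton.mp hx
  rw [smul_eq_mul, mul_assoc, he.eq]

theorem projective_span_singleton (he : IsIdempotentElem e) :
    Module.Projective A (Submodule.span A {e}) :=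
  .of_split (Submodule.span A {e}).subtype
    ((LinearMap.toSpanSingleton A A e).codRestrict _
      fun a => Submodule.mem_span_singleton.mpr ⟨a, rfl⟩)
    (LinearMap.ext fun x => Subtype.ext (he.mul_eq_self_of_mem_span_singleton x.2))

noncomputable def spanSingletonEquivOfLeftInverse (he : IsIdempotentElem e) {m : M}
    (hm : e • m = m) (hgen : Function.Surjective fun a : A => a • m) (ψ : M → A)
    (hψ : ∀ a : A, ψ (a • m) = a * e) : Submodule.span A {e} ≃ₗ[A] M :=
  .ofBijective ((LinearMap.toSpanSingleton A M m).domRestrict _) <| by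
    constructor
    · intro x y hxy
      have hψxy := congrArg ψ hxy
      simp only [LinearMap.domRestrict_apply, LinearMap.toSpanSingleton_apply, hψ] at hψxy
      rwa [he.mul_eq_self_of_mem_span_singleton x.2, he.mul_eq_self_of_mem_span_singleton y.2,
        ← Subtype.ext_iff] at hψxy
    · intro y
      obtain ⟨a, rfl⟩ := hgen y
      refine ⟨⟨a * e, Submodule.mem_span_singleton.mpr ⟨a, rfl⟩⟩, ?_⟩
      simp only [LinearMap.domRestrict_apply, LinearMap.toSpanSingleton_apply, mul_smul, hm]

end IsIdempotentElem

namespace MultilinearMap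

variable {R ι κ N : Type*} [CommSemiring R] [Fintype ι] [DecidableEq ι] [Fintype κ]
  [AddCommMonoid N] [Module R N]

noncomputable def ofPiSingle (z : (ι → κ) → N) : MultilinearMap R (fun _ : ι => κ → R) N :=
  ∑ u, (MultilinearMap.mkPiRing R ι (z u)).compLinearMap fun i => LinearMap.proj (u i)

theorem ofPiSingle_apply_single [DecidableEq κ] (z : (ι → κ) → N) (w : ι → κ) :
    ofPiSingle (R := R) z (fun i => Pi.single (w i) 1) = z w := by
  rw [ofPiSingle, sum_apply, Finset.sum_eq_single w]
  · simp
  · intro u _ hu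
    obtain ⟨i, hi⟩ := Function.ne_iff.mp hu
    simp only [compLinearMap_apply, mkPiRing_apply, LinearMap.proj_apply]
    rw [Finset.prod_eq_zero (Finset.mem_univ i) (by simp [hi]), zero_smul]
  · simp

end MultilinearMap

theorem extMap_eq_map {R M N : Type} [CommRing R] [AddCommGroup M] [Module R M]
    [AddCommGroup N] [Module R N] (r : ℕ) (f : M →ₗ[R] N) :
    extMap r f = exteriorPower.map r f := by
  ext v
  show ExteriorAlgebra.map f (ExteriorAlgebra.ιMulti R r v) = _
  simp [ExteriorAlgebra.map_apply_ιMulti, Function.comp_def]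

theorem natRep_single (n : ℕ) (f : Function.End (Fin n)) (i : Fin n) :
    natRep n f (Pi.single i 1) = Pi.single (f i) 1 := by
  funext j
  show (∑ k, if f k = j then Pi.single i (1 : ℂ) k else 0) = _
  rw [Finset.sum_eq_single i (fun k _ hk => by simp [hk]) (by simp)]
  simp [Pi.single_apply, eq_comm]

section TransformationMonoid

variable {n r : ℕ} (hr : 1 ≤ r) (hrn : r ≤ n)

def castLERetract (i : Fin n) : Fin r :=
  if h : (i : ℕ) < r then ⟨i, h⟩ else ⟨0, hr⟩

def extendFamily (u : Fin r → Fin n) : Function.End (Fin n) :=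
  fun i => u (castLERetract hr i)

theorem castLERetract_castLE (i : Fin r) : castLERetract hr (Fin.castLE hrn i) = i := by
  simp [castLERetract]

theorem extendFamily_castLE (u : Fin r → Fin n) (i : Fin r) :
    extendFamily hr u (Fin.castLE hrn i) = u i := by
  rw [extendFamily, castLERetract_castLE]

theorem permEmbed_eq_extendFamily (σ : Equiv.Perm (Fin r)) :
    permEmbed n r hr hrn σ = extendFamily hr (Fin.castLE hrn ∘ σ) :=
  rfl

theorem permEmbed_comp_castLE (σ : Equiv.Perm (Fin r)) :
    permEmbed n r hr hrn σ ∘ Fin.castLE hrn = Fin.castLE hrn ∘ σ := by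
  rw [permEmbed_eq_extendFamily]
  exact funext (extendFamily_castLE hr hrn _)

theorem extendFamily_mul_permEmbed (u : Fin r → Fin n) (σ : Equiv.Perm (Fin r)) :
    extendFamily hr u * permEmbed n r hr hrn σ = extendFamily hr (u ∘ σ) :=
  funext fun _ => extendFamily_castLE hr hrn u _

theorem permEmbed_mul (σ τ : Equiv.Perm (Fin r)) :
    permEmbed n r hr hrn (σ * τ) = permEmbed n r hr hrn σ * permEmbed n r hr hrn τ := by
  rw [permEmbed_eq_extendFamily hr hrn σ, extendFamily_mul_permEmbed, permEmbed_eq_extendFamily]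
  rfl

theorem mul_eIdem (f : Function.End (Fin n)) :
    f * eIdem n r = extendFamily hr (f ∘ Fin.castLE hrn) := by
  funext i
  show f (eIdem n r i) = f (Fin.castLE hrn (castLERetract hr i))
  unfold eIdem castLERetract
  split_ifs <;> rfl

theorem eIdem_mul_permEmbed (σ : Equiv.Perm (Fin r)) :
    eIdem n r * permEmbed n r hr hrn σ = permEmbed n r hr hrn σ :=
  funext fun _ => by
    show eIdem n r (Fin.castLE hrn _) = Fin.castLE hrn _
    simp [eIdem]

end TransformationMonoid

theorem inv_factorial_smul_sum_perm_const {𝕜 M : Type*} [DivisionRing 𝕜] [CharZero 𝕜]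
    [AddCommGroup M] [Module 𝕜 M] (r : ℕ) (x : M) :
    (r.factorial : 𝕜)⁻¹ • ∑ _σ : Equiv.Perm (Fin r), x = x := by
  rw [Finset.sum_const, Finset.card_univ, Fintype.card_perm, Fintype.card_fin,
    ← Nat.cast_smul_eq_nsmul 𝕜, smul_smul,
    inv_mul_cancel₀ (Nat.cast_ne_zero.mpr r.factorial_ne_zero), one_smul]

section Eta

variable {n r : ℕ} (hr : 1 ≤ r) (hrn : r ≤ n)

theorem eta_eq_sum_units_smul : eta n r hr hrn =
    (r.factorial : ℂ)⁻¹ • ∑ σ : Equiv.Perm (Fin r),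
      Equiv.Perm.sign σ • single (permEmbed n r hr hrn σ) (1 : ℂ) := by
  simp only [eta, Units.smul_def, ← Int.cast_smul_eq_zsmul ℂ, smul_single', mul_one]

theorem single_permEmbed_mul_eta (τ : Equiv.Perm (Fin r)) :
    single (permEmbed n r hr hrn τ) (1 : ℂ) * eta n r hr hrn =
      Equiv.Perm.sign τ • eta n r hr hrn := by
  rw [eta_eq_sum_units_smul, mul_smul_comm, smul_comm τ.sign, Finset.mul_sum]
  congr 1
  rw [Finset.smul_sum]
  refine Fintype.sum_equiv (Equiv.mulLeft τ) _ _ fun σ => ?_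
  rw [mul_smul_comm, single_mul_single, one_mul, Equiv.coe_mulLeft, permEmbed_mul, map_mul,
    mul_smul, smul_smul τ.sign, Int.units_mul_self, one_smul]

theorem isIdempotentElem_eta : IsIdempotentElem (eta n r hr hrn) := by
  have hterm : ∀ σ : Equiv.Perm (Fin r),
      (Equiv.Perm.sign σ • single (permEmbed n r hr hrn σ) (1 : ℂ)) * eta n r hr hrn =
        eta n r hr hrn := fun σ => by
    rw [smul_mul_assoc, single_permEmbed_mul_eta, smul_smul, Int.units_mul_self, one_smul]
  rw [IsIdempotentElem]
  nth_rewrite 1 [eta_eq_sum_units_smul]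
  rw [smul_mul_assoc, Finset.sum_mul, Finset.sum_congr rfl fun σ _ => hterm σ,
    inv_factorial_smul_sum_perm_const]

theorem single_eIdem_mul_eta : single (eIdem n r) (1 : ℂ) * eta n r hr hrn = eta n r hr hrn := by
  simp only [eta_eq_sum_units_smul, mul_smul_comm, Finset.mul_sum, single_mul_single, one_mul,
    eIdem_mul_permEmbed]

theorem single_mul_eta (f : Function.End (Fin n)) :
    single f (1 : ℂ) * eta n r hr hrn =
      single (extendFamily hr (f ∘ Fin.castLE hrn)) 1 * eta n r hr hrn := by
  conv_lhs => rw [← single_eIdem_mul_eta hr hrn]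
  rw [← mul_assoc, single_mul_single, mul_eIdem hr hrn, one_mul]

theorem single_extendFamily_mul_eta (u : Fin r → Fin n) :
    single (extendFamily hr u) (1 : ℂ) * eta n r hr hrn =
      (r.factorial : ℂ)⁻¹ • ∑ σ : Equiv.Perm (Fin r),
        Equiv.Perm.sign σ • single (extendFamily hr (u ∘ σ)) 1 := by
  simp only [eta_eq_sum_units_smul, mul_smul_comm, Finset.mul_sum, single_mul_single, one_mul,
    extendFamily_mul_permEmbed]

end Eta

section ExteriorPower

variable {n r : ℕ} (hr : 1 ≤ r) (hrn : r ≤ n)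

noncomputable def basisWedge (u : Fin r → Fin n) : ⋀[ℂ]^r (Fin n → ℂ) :=
  exteriorPower.ιMulti ℂ r fun k => Pi.single (u k) 1

noncomputable def topWedge : ⋀[ℂ]^r (Fin n → ℂ) :=
  basisWedge (Fin.castLE hrn)

theorem basisWedge_comp_perm (u : Fin r → Fin n) (σ : Equiv.Perm (Fin r)) :
    basisWedge (u ∘ σ) = Equiv.Perm.sign σ • basisWedge u :=
  (exteriorPower.ιMulti ℂ r).map_perm (fun k => Pi.single (u k) 1) σ

theorem asAlgebraHom_single_basisWedge (f : Function.End (Fin n)) (u : Fin r → Fin n) :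
    (extRep n r).asAlgebraHom (single f 1) (basisWedge u) = basisWedge (f ∘ u) := by
  rw [Representation.asAlgebraHom_single_one]
  show extMap r (natRep n f) _ = _
  rw [extMap_eq_map, basisWedge, basisWedge, exteriorPower.map_apply_ιMulti]
  exact congrArg _ (funext fun k => natRep_single n f (u k))

theorem asAlgebraHom_eta_topWedge :
    (extRep n r).asAlgebraHom (eta n r hr hrn) (topWedge hrn) = topWedge hrn := by
  have hterm : ∀ σ : Equiv.Perm (Fin r), (extRep n r).asAlgebraHom
      (Equiv.Perm.sign σ • single (permEmbed n r hr hrn σ) 1) (topWedge hrn) = topWedge hrn :=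
    fun σ => by
      rw [map_zsmul_unit, LinearMap.smul_apply, topWedge, asAlgebraHom_single_basisWedge,
        permEmbed_comp_castLE, basisWedge_comp_perm, smul_smul, Int.units_mul_self, one_smul]
  rw [eta_eq_sum_units_smul, map_smul, map_sum, LinearMap.smul_apply, LinearMap.sum_apply,
    Finset.sum_congr rfl fun σ _ => hterm σ, inv_factorial_smul_sum_perm_const]

/-- A left inverse of `a ↦ a • topWedge hrn` on `ℂ[T_n] η`: the antisymmetrization of
`v_{u 0} ⊗ ⋯ ⊗ v_{u (r-1)} ↦ extendFamily hr u`. -/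
noncomputable def wedgeToMonoidAlgebra : ⋀[ℂ]^r (Fin n → ℂ) →ₗ[ℂ] ℂ[Function.End (Fin n)] :=
  (r.factorial : ℂ)⁻¹ • exteriorPower.alternatingMapLinearEquiv (MultilinearMap.alternatization
    (MultilinearMap.ofPiSingle fun u => single (extendFamily hr u) 1))

theorem wedgeToMonoidAlgebra_basisWedge (u : Fin r → Fin n) :
    wedgeToMonoidAlgebra hr (basisWedge u) = single (extendFamily hr u) 1 * eta n r hr hrn := by
  rw [single_extendFamily_mul_eta, wedgeToMonoidAlgebra, LinearMap.smul_apply, basisWedge,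
    exteriorPower.alternatingMapLinearEquiv_apply_ιMulti, MultilinearMap.alternatization_apply]
  simp only [MultilinearMap.domDomCongr_apply, MultilinearMap.ofPiSingle_apply_single]
  rfl

theorem wedgeToMonoidAlgebra_asAlgebraHom_topWedge (a : ℂ[Function.End (Fin n)]) :
    wedgeToMonoidAlgebra hr ((extRep n r).asAlgebraHom a (topWedge hrn)) =
      a * eta n r hr hrn := by
  induction a using MonoidAlgebra.induction_on with
  | of f =>
    rw [of_apply, topWedge, asAlgebraHom_single_basisWedge, wedgeToMonoidAlgebra_basisWedge hr hrn]
    exact (single_mul_eta hr hrn f).symm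
  | add a b ha hb => rw [map_add, LinearMap.add_apply, map_add, ha, hb, add_mul]
  | smul c a ha => rw [map_smul, LinearMap.smul_apply, map_smul, ha, smul_mul_assoc]

theorem surjective_asAlgebraHom_topWedge :
    Function.Surjective fun a : ℂ[Function.End (Fin n)] =>
      (extRep n r).asAlgebraHom a (topWedge hrn) := by
  let evalAt : ℂ[Function.End (Fin n)] →ₗ[ℂ] ⋀[ℂ]^r (Fin n → ℂ) :=
    LinearMap.applyₗ (topWedge hrn) ∘ₗ (extRep n r).asAlgebraHom.toLinearMap
  suffices LinearMap.range evalAt = ⊤ from LinearMap.range_eq_top.mp this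
  rw [eq_top_iff, ← exteriorPower.ιMulti_span_of_span ℂ r (Fin n → ℂ) (Pi.basisFun ℂ _).span_eq,
    Submodule.span_le]
  rintro _ ⟨v, hrange, rfl⟩
  choose u hu using fun k => hrange ⟨k, rfl⟩
  have hv : v = fun k => Pi.single (u k) 1 := funext fun k => by rw [← hu k, Pi.basisFun_apply]
  refine ⟨single (Function.extend (Fin.castLE hrn) u id) 1, ?_⟩
  have hext : Function.extend (Fin.castLE hrn) u id ∘ Fin.castLE hrn = u :=
    funext fun k => (Fin.castLE_injective hrn).extend_apply u id k
  subst hv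
  exact (asAlgebraHom_single_basisWedge _ _).trans (congrArg basisWedge hext)

end ExteriorPower

/-- The exterior power `Λ^r(ℂ^n)` with the induced diagonal `T_n`-action (the
representation `extRep n r`, giving a `ℂ[T_n]`-module structure) satisfies:
`η = (1/r!) ∑_{g ∈ G} sgn(g|_{[r]}) g` (where `G ≅ S_r` is the maximal subgroup at
`e_r`) is an idempotent of the monoid algebra `ℂ[T_n]`, the left ideal `ℂ[T_n]·η`
is isomorphic to `Λ^r(ℂ^n)` as a left `ℂ[T_n]`-module, and in particular
`Λ^r(ℂ^n)` is a projective `ℂ[T_n]`-module. -/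
theorem exteriorPower_projective (n r : ℕ) (hr : 1 ≤ r) (hrn : r ≤ n) :
    IsIdempotentElem (eta n r hr hrn) ∧
    Nonempty ((Submodule.span (MonoidAlgebra ℂ (Function.End (Fin n))) {eta n r hr hrn})
      ≃ₗ[MonoidAlgebra ℂ (Function.End (Fin n))] (extRep n r).asModule) ∧
    Module.Projective (MonoidAlgebra ℂ (Function.End (Fin n))) ((extRep n r).asModule) := by
  have he := isIdempotentElem_eta hr hrn
  let ρ := extRep n r
  let m : ρ.asModule := ρ.asModuleEquiv.symm (topWedge hrn)
  have hsmul (a : ℂ[Function.End (Fin n)]) :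
      ρ.asModuleEquiv (a • m) = ρ.asAlgebraHom a (topWedge hrn) := by
    rw [Representation.asModuleEquiv_map_smul, LinearEquiv.apply_symm_apply]
  have hm : eta n r hr hrn • m = m := ρ.asModuleEquiv.injective <| by
    rw [hsmul, asAlgebraHom_eta_topWedge, LinearEquiv.apply_symm_apply]
  have hgen : Function.Surjective fun a : ℂ[Function.End (Fin n)] => a • m := by
    intro y
    obtain ⟨a, ha⟩ := surjective_asAlgebraHom_topWedge hrn (ρ.asModuleEquiv y)
    exact ⟨a, ρ.asModuleEquiv.injective ((hsmul a).trans ha)⟩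
  have hψ (a : ℂ[Function.End (Fin n)]) :
      wedgeToMonoidAlgebra hr (ρ.asModuleEquiv (a • m)) = a * eta n r hr hrn := by
    rw [hsmul, wedgeToMonoidAlgebra_asAlgebraHom_topWedge]
  let iso := he.spanSingletonEquivOfLeftInverse hm hgen
    (wedgeToMonoidAlgebra hr ∘ ρ.asModuleEquiv) hψ
  have := he.projective_span_singleton
  exact ⟨he, ⟨iso⟩, .of_equiv iso⟩
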